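/- Let (σ₁,σ₂) be a local umbilic-free Legendre map in curvature line coordinates on U, and suppose ∂_uσ₁ = 0 identically (f is a channel surface with normalized circular curvature sphere lift σ₁). Define η_u := 0 and η_v := σ₁ ∧ ∂_vσ₁ : U → End(ℝ^6). Then: (i) ∂_uη_v − ∂_vη_u = 0 (the 1-form η = σ₁∧⋆dσ₁ is closed); (ii) η_u(p)η_v(p) − η_v(p)η_u(p) = 0 at every point ([η∧η] = 0); (iii) for all i,j ∈ {u,v} and k ∈ {1,2}, η_i(∂_jσ_k) ∈ f = span{σ₁,σ₂}, and the trace q_{ij} of the induced endomorphism of f (ρ ↦ η_i(∂_jρ)) satisfies q_{uu} = q_{uv} = q_{vu} = 0 and q_{vv} = −⟨∂_vσ₁,∂_vσ₁⟩ < 0. Hence q is a nonzero degenerate quadratic differential and f is an Ω₀-surface. -/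

import Mathlib

noncomputable section

/-- `ℝ^{4,2}`: `ℝ^6` with a bilinear form of signature (4,2). -/
abbrev V6 : Type := Fin 6 → ℝ

/-- The symmetric bilinear form of signature (4,2) on `ℝ^6`. -/
def form (x y : V6) : ℝ :=
  x 0 * y 0 + x 1 * y 1 + x 2 * y 2 + x 3 * y 3 - x 4 * y 4 - x 5 * y 5

/-- Partial derivative in the first (`u`) coordinate. -/
def pu (σ : ℝ × ℝ → V6) (p : ℝ × ℝ) : V6 := fderiv ℝ σ p (1, 0)

/-- Partial derivative in the second (`v`) coordinate. -/
def pv (σ : ℝ × ℝ → V6) (p : ℝ × ℝ) : V6 := fderiv ℝ σ p (0, 1)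

/-- The contact plane `f = span{σ₁, σ₂}`. -/
def spanF (σ₁ σ₂ : ℝ × ℝ → V6) (p : ℝ × ℝ) : Submodule ℝ V6 :=
  Submodule.span ℝ {σ₁ p, σ₂ p}

/-- A local umbilic-free Legendre map in curvature line coordinates `(u,v)` on `U`,
given by lifts `σ₁, σ₂` of the two curvature sphere congruences, with curvature
directions `T₁ = ∂_u` (for `s₁ = span{σ₁}`) and `T₂ = ∂_v` (for `s₂ = span{σ₂}`). -/
structure IsLegendre (U : Set (ℝ × ℝ)) (σ₁ σ₂ : ℝ × ℝ → V6) : Prop where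
  open_U : IsOpen U
  smooth₁ : ContDiffOn ℝ (⊤ : ℕ∞) σ₁ U
  smooth₂ : ContDiffOn ℝ (⊤ : ℕ∞) σ₂ U
  indep : ∀ p ∈ U, LinearIndependent ℝ ![σ₁ p, σ₂ p]
  iso₁₁ : ∀ p ∈ U, form (σ₁ p) (σ₁ p) = 0
  iso₁₂ : ∀ p ∈ U, form (σ₁ p) (σ₂ p) = 0
  iso₂₂ : ∀ p ∈ U, form (σ₂ p) (σ₂ p) = 0
  contact_u : ∀ p ∈ U, form (pu σ₁ p) (σ₂ p) = 0
  contact_v : ∀ p ∈ U, form (pv σ₁ p) (σ₂ p) = 0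
  curv₁ : ∀ p ∈ U, pu σ₁ p ∈ spanF σ₁ σ₂ p
  curv₂ : ∀ p ∈ U, pv σ₂ p ∈ spanF σ₁ σ₂ p
  umb₁ : ∀ p ∈ U, pv σ₁ p ∉ spanF σ₁ σ₂ p
  umb₂ : ∀ p ∈ U, pu σ₂ p ∉ spanF σ₁ σ₂ p

/-- The wedge `a∧b`, acting as the skew endomorphism `x ↦ ⟨a,x⟩b − ⟨b,x⟩a`. -/
def wedge (a b x : V6) : V6 := form a x • b - form b x • a

/-- `traceRep σ₁ σ₂ w₁ w₂ q` expresses that the endomorphism of `f = span{σ₁,σ₂}`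
sending `σ₁ ↦ w₁`, `σ₂ ↦ w₂` is well defined (has image in `f`) and has trace `q`. -/
def traceRep (σ₁ σ₂ w₁ w₂ : V6) (q : ℝ) : Prop :=
  ∃ a b c d : ℝ, w₁ = a • σ₁ + b • σ₂ ∧ w₂ = c • σ₁ + d • σ₂ ∧ a + d = q

/-! ### Auxiliary lemmas -/

@[simp] lemma form_zero_left (y : V6) : form 0 y = 0 := by simp [form]

@[simp] lemma form_zero_right (x : V6) : form x 0 = 0 := by simp [form]

/-- The bilinear form, as a continuous linear functional in its first argument. -/
def formL (c : V6) : V6 →L[ℝ] ℝ :=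
  c 0 • ContinuousLinearMap.proj 0 + c 1 • ContinuousLinearMap.proj 1
    + c 2 • ContinuousLinearMap.proj 2 + c 3 • ContinuousLinearMap.proj 3
    - c 4 • ContinuousLinearMap.proj 4 - c 5 • ContinuousLinearMap.proj 5

@[simp] lemma formL_apply (c v : V6) : formL c v = form v c := by
  simp [formL, form]
  ring

lemma hasFDerivAt_form {σ τ : ℝ × ℝ → V6} {S T : (ℝ × ℝ) →L[ℝ] V6} {p : ℝ × ℝ}
    (hσ : HasFDerivAt σ S p) (hτ : HasFDerivAt τ T p) :
    HasFDerivAt (fun q => form (σ q) (τ q)) ((formL (τ p)).comp S + (formL (σ p)).comp T) p := by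
  have hi : ∀ i : Fin 6, HasFDerivAt (fun q => σ q i) ((ContinuousLinearMap.proj i).comp S) p := by
    intro i
    exact ((ContinuousLinearMap.proj (R := ℝ) (φ := fun _ : Fin 6 => ℝ) i).hasFDerivAt).comp p hσ
  have hj : ∀ i : Fin 6, HasFDerivAt (fun q => τ q i) ((ContinuousLinearMap.proj i).comp T) p := by
    intro i
    exact ((ContinuousLinearMap.proj (R := ℝ) (φ := fun _ : Fin 6 => ℝ) i).hasFDerivAt).comp p hτ
  have H := (((((((hi 0).mul (hj 0)).add ((hi 1).mul (hj 1))).add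
    ((hi 2).mul (hj 2))).add ((hi 3).mul (hj 3))).sub
    ((hi 4).mul (hj 4))).sub ((hi 5).mul (hj 5)))
  have hD : (formL (τ p)).comp S + (formL (σ p)).comp T
      = (σ p 0 • (ContinuousLinearMap.proj 0).comp T + τ p 0 • (ContinuousLinearMap.proj 0).comp S +
          (σ p 1 • (ContinuousLinearMap.proj 1).comp T + τ p 1 • (ContinuousLinearMap.proj 1).comp S) +
          (σ p 2 • (ContinuousLinearMap.proj 2).comp T + τ p 2 • (ContinuousLinearMap.proj 2).comp S) +
          (σ p 3 • (ContinuousLinearMap.proj 3).comp T + τ p 3 • (ContinuousLinearMap.proj 3).comp S) -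
          (σ p 4 • (ContinuousLinearMap.proj 4).comp T + τ p 4 • (ContinuousLinearMap.proj 4).comp S) -
          (σ p 5 • (ContinuousLinearMap.proj 5).comp T + τ p 5 • (ContinuousLinearMap.proj 5).comp S)) := by
    refine ContinuousLinearMap.ext fun w => ?_
    simp [formL, form]
    ring
  rw [hD]
  exact H

lemma form_deriv_zero {U : Set (ℝ × ℝ)} {σ τ : ℝ × ℝ → V6} (hU : IsOpen U) {p : ℝ × ℝ}
    (hp : p ∈ U) (hσ : DifferentiableAt ℝ σ p) (hτ : DifferentiableAt ℝ τ p)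
    (h0 : ∀ q ∈ U, form (σ q) (τ q) = 0) (w : ℝ × ℝ) :
    form (fderiv ℝ σ p w) (τ p) + form (σ p) (fderiv ℝ τ p w) = 0 := by
  have H := hasFDerivAt_form hσ.hasFDerivAt hτ.hasFDerivAt
  have he : (fun q => form (σ q) (τ q)) =ᶠ[nhds p] (fun _ => (0:ℝ)) :=
    Filter.eventuallyEq_of_mem (hU.mem_nhds hp) h0
  have h2 : ((formL (τ p)).comp (fderiv ℝ σ p) + (formL (σ p)).comp (fderiv ℝ τ p))
      = (0 : (ℝ × ℝ) →L[ℝ] ℝ) := by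
    rw [← H.fderiv, he.fderiv_eq]
    exact fderiv_const_apply 0
  have h3 := congrFun (congrArg DFunLike.coe h2) w
  have hc : form (σ p) (fderiv ℝ τ p w) = form (fderiv ℝ τ p w) (σ p) := by
    simp [form]; ring
  rw [hc]
  simpa using h3

lemma form_pos_of_perp {s1 s2 x : V6} (hind : LinearIndependent ℝ ![s1, s2])
    (h11 : form s1 s1 = 0) (h12 : form s1 s2 = 0) (h22 : form s2 s2 = 0)
    (hx1 : form x s1 = 0) (hx2 : form x s2 = 0)
    (hx : x ∉ Submodule.span ℝ {s1, s2}) : 0 < form x x := by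
  by_contra hle
  push_neg at hle
  have hind3 : LinearIndependent ℝ ![x, s1, s2] := by
    rw [show ![x, s1, s2] = Fin.cons x ![s1, s2] from rfl, linearIndependent_fin_cons]
    refine ⟨hind, ?_⟩
    simpa [Set.pair_comm s2 s1] using hx
  set π : V6 →ₗ[ℝ] ℝ × ℝ := (LinearMap.proj 4).prod (LinearMap.proj 5) with hπ
  have hdisj : Disjoint (Submodule.span ℝ (Set.range ![x, s1, s2])) (LinearMap.ker π) := by
    rw [Submodule.disjoint_def]
    intro v hv hker
    rw [LinearMap.mem_ker, hπ, Prod.ext_iff] at hker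
    obtain ⟨h4, h5⟩ := hker
    simp only [LinearMap.prod_apply, LinearMap.proj_apply, Function.prod] at h4 h5
    obtain ⟨c, rfl⟩ := (Submodule.mem_span_range_iff_exists_fun ℝ).1 hv
    set a := c 0; set b := c 1; set d := c 2
    have hv' : (∑ i, c i • ![x, s1, s2] i) = a • x + b • s1 + d • s2 := by
      simp [Fin.sum_univ_three, a, b, d]
    rw [hv'] at h4 h5 ⊢
    set v := a • x + b • s1 + d • s2 with hvdef
    have hexp : form v v = a * a * form x x + b * b * form s1 s1 + d * d * form s2 s2
        + 2 * (a * b) * form x s1 + 2 * (a * d) * form x s2 + 2 * (b * d) * form s1 s2 := by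
      simp [hvdef, form]
      ring
    rw [h11, h22, h12, hx1, hx2] at hexp
    have hle2 : form v v ≤ 0 := by
      rw [hexp]
      nlinarith [mul_self_nonneg a]
    have h42 : v 4 = 0 := h4
    have h52 : v 5 = 0 := h5
    have hge : form v v = v 0 ^ 2 + v 1 ^ 2 + v 2 ^ 2 + v 3 ^ 2 := by
      rw [form, h42, h52]; ring
    have hsum : v 0 ^ 2 + v 1 ^ 2 + v 2 ^ 2 + v 3 ^ 2 ≤ 0 := hge ▸ hle2
    have h0 : v 0 = 0 := sq_eq_zero_iff.1 (le_antisymm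
      (by linarith [sq_nonneg (v 1), sq_nonneg (v 2), sq_nonneg (v 3)]) (sq_nonneg (v 0)))
    have h1 : v 1 = 0 := sq_eq_zero_iff.1 (le_antisymm
      (by linarith [sq_nonneg (v 0), sq_nonneg (v 2), sq_nonneg (v 3)]) (sq_nonneg (v 1)))
    have h2 : v 2 = 0 := sq_eq_zero_iff.1 (le_antisymm
      (by linarith [sq_nonneg (v 0), sq_nonneg (v 1), sq_nonneg (v 3)]) (sq_nonneg (v 2)))
    have h3 : v 3 = 0 := sq_eq_zero_iff.1 (le_antisymm
      (by linarith [sq_nonneg (v 0), sq_nonneg (v 1), sq_nonneg (v 2)]) (sq_nonneg (v 3)))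
    funext i
    fin_cases i <;>
      simp only [Pi.zero_apply] <;>
      first
      | exact h0
      | exact h1
      | exact h2
      | exact h3
      | exact h42
      | exact h52
  have hmap := hind3.map hdisj
  have hcard := hmap.fintype_card_le_finrank
  simp [Module.finrank_prod] at hcard

/-- A channel surface (with normalised circular lift, `∂_uσ₁ = 0`) is an `Ω₀`-surface:
the 1-form `η` with `η_u = 0`, `η_v = σ₁ ∧ ∂_vσ₁` is closed, satisfies `[η∧η] = 0`,
and its quadratic differential `q` is nonzero and degenerate, with
`q_uu = q_uv = q_vu = 0` and `q_vv = −⟨∂_vσ₁,∂_vσ₁⟩ < 0`. -/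
theorem channel_surface_is_omega0
    (U : Set (ℝ × ℝ)) (σ₁ σ₂ : ℝ × ℝ → V6)
    (hL : IsLegendre U σ₁ σ₂)
    (hchan : ∀ p ∈ U, pu σ₁ p = 0) :
    -- (i) closedness of η: ∂_u η_v − ∂_v η_u = 0
    (∀ x : V6, ∀ p ∈ U,
      pu (fun q => wedge (σ₁ q) (pv σ₁ q) x) p
        - pv (fun q => (0 : V6)) p = 0) ∧
    -- (ii) [η∧η] = 0
    (∀ p ∈ U, ∀ x : V6,
      (0 : V6) - wedge (σ₁ p) (pv σ₁ p) (0 : V6) = 0) ∧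
    -- (iii) quadratic differential: q_uu = q_uv = q_vu = 0 and
    -- q_vv = −⟨∂_vσ₁,∂_vσ₁⟩ < 0
    (∀ p ∈ U,
      traceRep (σ₁ p) (σ₂ p) (0 : V6) (0 : V6) 0 ∧
      traceRep (σ₁ p) (σ₂ p) (0 : V6) (0 : V6) 0 ∧
      traceRep (σ₁ p) (σ₂ p)
        (wedge (σ₁ p) (pv σ₁ p) (pu σ₁ p))
        (wedge (σ₁ p) (pv σ₁ p) (pu σ₂ p)) 0 ∧
      traceRep (σ₁ p) (σ₂ p)
        (wedge (σ₁ p) (pv σ₁ p) (pv σ₁ p))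
        (wedge (σ₁ p) (pv σ₁ p) (pv σ₂ p))
        (-form (pv σ₁ p) (pv σ₁ p)) ∧
      -form (pv σ₁ p) (pv σ₁ p) < 0) := by
  have hU := hL.open_U
  have d1 : ∀ p ∈ U, DifferentiableAt ℝ σ₁ p := fun p hp =>
    (hL.smooth₁.differentiableOn (by simp)).differentiableAt (hU.mem_nhds hp)
  have d2 : ∀ p ∈ U, DifferentiableAt ℝ σ₂ p := fun p hp =>
    (hL.smooth₂.differentiableOn (by simp)).differentiableAt (hU.mem_nhds hp)
  refine ⟨?_, ?_, ?_⟩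
  · -- (i)
    intro x p hp
    have e2 : pv (fun _ : ℝ × ℝ => (0 : V6)) p = 0 := by
      unfold pv
      rw [fderiv_const_apply]
      rfl
    rw [e2, sub_zero]
    set F := fderiv ℝ σ₁ with hF
    have hFd : ContDiffOn ℝ (⊤ : ℕ∞) F U := hL.smooth₁.fderiv_of_isOpen hU (by simp)
    have hFdiff : DifferentiableAt ℝ F p :=
      (hFd.differentiableOn (by simp)).differentiableAt (hU.mem_nhds hp)
    set F' := fderiv ℝ F p with hF'
    have hFhas : HasFDerivAt F F' p := hFdiff.hasFDerivAt
    have hev : ∀ᶠ y in nhds p, HasFDerivAt σ₁ (F y) y :=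
      Filter.eventually_of_mem (hU.mem_nhds hp) (fun q hq => (d1 q hq).hasFDerivAt)
    have hsym := second_derivative_symmetric_of_eventually hev hFhas
      ((1:ℝ), (0:ℝ)) ((0:ℝ), (1:ℝ))
    have hzero_u : (fun q => F q ((1:ℝ), (0:ℝ))) =ᶠ[nhds p] (fun _ => (0:V6)) :=
      Filter.eventuallyEq_of_mem (hU.mem_nhds hp) (fun q hq => hchan q hq)
    have hFu : HasFDerivAt (fun q => F q ((1:ℝ), (0:ℝ)))
        ((F p).comp (0 : (ℝ × ℝ) →L[ℝ] (ℝ × ℝ)) + F'.flip ((1:ℝ), (0:ℝ))) p :=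
      hFhas.clm_apply (hasFDerivAt_const _ _)
    have hcross : F' ((1:ℝ), (0:ℝ)) ((0:ℝ), (1:ℝ)) = 0 := by
      rw [hsym]
      have h0 : (F p).comp (0 : (ℝ × ℝ) →L[ℝ] (ℝ × ℝ)) + F'.flip ((1:ℝ), (0:ℝ)) = 0 := by
        rw [← hFu.fderiv, hzero_u.fderiv_eq]
        exact fderiv_const_apply 0
      have h0' := congrFun (congrArg DFunLike.coe h0) ((0:ℝ), (1:ℝ))
      simpa using h0'
    have hpvHas : HasFDerivAt (fun q => F q ((0:ℝ), (1:ℝ)))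
        ((F p).comp (0 : (ℝ × ℝ) →L[ℝ] (ℝ × ℝ)) + F'.flip ((0:ℝ), (1:ℝ))) p :=
      hFhas.clm_apply (hasFDerivAt_const _ _)
    have h1 := hasFDerivAt_form (d1 p hp).hasFDerivAt (hasFDerivAt_const x p)
    have h2 := hasFDerivAt_form hpvHas (hasFDerivAt_const x p)
    have Hh := (h1.smul hpvHas).sub (h2.smul (d1 p hp).hasFDerivAt)
    have hpu0 : F p ((1:ℝ), (0:ℝ)) = 0 := hchan p hp
    have Hh' : HasFDerivAt (fun q => wedge (σ₁ q) (pv σ₁ q) x) _ p := Hh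
    unfold pu
    rw [Hh'.fderiv]
    simp [hpu0, hcross, show fderiv ℝ σ₁ p ((1:ℝ), (0:ℝ)) = 0 from hpu0]
  · -- (ii)
    intro p hp x
    simp [wedge]
  · -- (iii)
    intro p hp
    have A1 : form (pv σ₁ p) (σ₁ p) = 0 := by
      have h := form_deriv_zero hU hp (d1 p hp) (d1 p hp) hL.iso₁₁ ((0:ℝ), (1:ℝ))
      have hcomm : form (σ₁ p) (fderiv ℝ σ₁ p ((0:ℝ), (1:ℝ)))
          = form (fderiv ℝ σ₁ p ((0:ℝ), (1:ℝ))) (σ₁ p) := by simp [form]; ring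
      rw [hcomm] at h
      have : form (fderiv ℝ σ₁ p ((0:ℝ), (1:ℝ))) (σ₁ p) = 0 := by linarith
      exact this
    have A1' : form (σ₁ p) (pv σ₁ p) = 0 := by
      have hcomm : form (σ₁ p) (pv σ₁ p) = form (pv σ₁ p) (σ₁ p) := by simp [form]; ring
      rw [hcomm]; exact A1
    have A2 : form (σ₁ p) (pv σ₂ p) = 0 := by
      have h := form_deriv_zero hU hp (d1 p hp) (d2 p hp) hL.iso₁₂ ((0:ℝ), (1:ℝ))
      have hfirst : form (fderiv ℝ σ₁ p ((0:ℝ), (1:ℝ))) (σ₂ p) = 0 := hL.contact_v p hp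
      have : form (σ₁ p) (fderiv ℝ σ₂ p ((0:ℝ), (1:ℝ))) = 0 := by linarith
      exact this
    have A3 : form (σ₁ p) (pu σ₂ p) = 0 := by
      have h := form_deriv_zero hU hp (d1 p hp) (d2 p hp) hL.iso₁₂ ((1:ℝ), (0:ℝ))
      have hfirst : form (fderiv ℝ σ₁ p ((1:ℝ), (0:ℝ))) (σ₂ p) = 0 := by
        rw [show fderiv ℝ σ₁ p ((1:ℝ), (0:ℝ)) = pu σ₁ p from rfl, hchan p hp]
        simp
      have : form (σ₁ p) (fderiv ℝ σ₂ p ((1:ℝ), (0:ℝ))) = 0 := by linarith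
      exact this
    refine ⟨⟨0, 0, 0, 0, by simp, by simp, by ring⟩,
      ⟨0, 0, 0, 0, by simp, by simp, by ring⟩, ?_, ?_, ?_⟩
    · refine ⟨0, 0, -form (pv σ₁ p) (pu σ₂ p), 0, ?_, ?_, by ring⟩
      · rw [hchan p hp]
        simp [wedge]
      · simp [wedge, A3]
    · refine ⟨-form (pv σ₁ p) (pv σ₁ p), 0, -form (pv σ₁ p) (pv σ₂ p), 0, ?_, ?_, by ring⟩
      · simp [wedge, A1']
      · simp [wedge, A2]
    · have hpos : 0 < form (pv σ₁ p) (pv σ₁ p) :=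
        form_pos_of_perp (hL.indep p hp) (hL.iso₁₁ p hp) (hL.iso₁₂ p hp) (hL.iso₂₂ p hp)
          A1 (hL.contact_v p hp) (hL.umb₁ p hp)
      linarith
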